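/- Let a control-affine system be locally accessible on a positively invariant set M. Then every invariant control set C ⊂ M has nonempty interior, satisfies cl_M(int C) = C, and both C and int C are positively invariant; moreover int C ⊂ O⁺(x) and C = cl_M O⁺(x) for all x ∈ C. -/

import Mathlib

open MeasureTheory Set Topology

/-- A control-affine system `ẋ = f₀(x) + ∑ vᵢ(t) fᵢ(x)` on `ℝ^d` with Lipschitz
continuous vector fields and compact control range `V ⊆ ℝ^m`.  The (unique, global)
solutions are bundled as the data `φ` together with their defining properties. -/
structure CAS (d m : ℕ) where
  /-- the drift vector field -/
  f0 : (Fin d → ℝ) → (Fin d → ℝ)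
  /-- the control vector fields -/
  f : Fin m → (Fin d → ℝ) → (Fin d → ℝ)
  /-- the control range -/
  V : Set (Fin m → ℝ)
  lip0 : ∃ K, LipschitzWith K f0
  lip : ∀ i, ∃ K, LipschitzWith K (f i)
  V_compact : IsCompact V
  /-- the solution map: `φ x v t` is the solution at time `t` starting at `x` with control `v` -/
  φ : (Fin d → ℝ) → (ℝ → (Fin m → ℝ)) → ℝ → (Fin d → ℝ)
  φ_init : ∀ x v, φ x v 0 = x
  φ_cont : ∀ x v, Continuous (φ x v)
  /-- solutions are (Carathéodory) solutions of the ODE -/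
  φ_sol : ∀ (x : Fin d → ℝ) (v : ℝ → (Fin m → ℝ)), Measurable v → (∀ t, v t ∈ V) →
    ∀ t, 0 ≤ t →
      φ x v t = x + ∫ s in (0:ℝ)..t, (f0 (φ x v s) + ∑ i, v s i • f (i) (φ x v s))

namespace CAS

variable {d m : ℕ}

/-- the set of admissible controls -/
def ctrl (S : CAS d m) : Set (ℝ → (Fin m → ℝ)) :=
  {v | Measurable v ∧ ∀ t, v t ∈ S.V}

/-- a control is piecewise constant if it has only finitely many discontinuities on
every bounded interval, i.e. it is constant between the members of a sequence of
switching times tending to infinity -/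
def PiecewiseConst (v : ℝ → (Fin m → ℝ)) : Prop :=
  ∃ τ : ℕ → ℝ, τ 0 = 0 ∧ StrictMono τ ∧ Filter.Tendsto τ Filter.atTop Filter.atTop ∧
    ∀ n, ∀ t ∈ Ico (τ n) (τ (n + 1)), v t = v (τ n)

/-- the reachable set from `x` -/
def reach (S : CAS d m) (x : Fin d → ℝ) : Set (Fin d → ℝ) :=
  {y | ∃ v ∈ S.ctrl, ∃ t ≥ (0:ℝ), S.φ x v t = y}

/-- the set reachable from `x` with piecewise constant controls -/
def reachPC (S : CAS d m) (x : Fin d → ℝ) : Set (Fin d → ℝ) :=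
  {y | ∃ v ∈ S.ctrl, PiecewiseConst v ∧ ∃ t ≥ (0:ℝ), S.φ x v t = y}

/-- the reachable set from `x` up to time `T` -/
def reachLe (S : CAS d m) (T : ℝ) (x : Fin d → ℝ) : Set (Fin d → ℝ) :=
  {y | ∃ v ∈ S.ctrl, ∃ t ∈ Icc (0:ℝ) T, S.φ x v t = y}

/-- the controllable set to `x` up to time `T` -/
def contrLe (S : CAS d m) (T : ℝ) (x : Fin d → ℝ) : Set (Fin d → ℝ) :=
  {y | ∃ v ∈ S.ctrl, ∃ t ∈ Icc (0:ℝ) T, S.φ y v t = x}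

/-- positive invariance of a set -/
def posInv (S : CAS d m) (M : Set (Fin d → ℝ)) : Prop :=
  ∀ x ∈ M, ∀ v ∈ S.ctrl, ∀ t ≥ (0:ℝ), S.φ x v t ∈ M

/-- invariance of a set -/
def inv (S : CAS d m) (M : Set (Fin d → ℝ)) : Prop :=
  ∀ t ≥ (0:ℝ), {y | ∃ x ∈ M, ∃ v ∈ S.ctrl, S.φ x v t = y} = M

/-- the two defining properties (i) controlled invariance and (ii) approximate
reachability of a control set -/
def controlSetProps (S : CAS d m) (D : Set (Fin d → ℝ)) : Prop :=
  (∀ x ∈ D, ∃ v ∈ S.ctrl, ∀ t ≥ (0:ℝ), S.φ x v t ∈ D) ∧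
  (∀ x ∈ D, D ⊆ closure (S.reach x))

/-- a control set: a maximal nonempty set with the properties `controlSetProps` -/
def isControlSet (S : CAS d m) (D : Set (Fin d → ℝ)) : Prop :=
  D.Nonempty ∧ S.controlSetProps D ∧
  ∀ D', D ⊆ D' → S.controlSetProps D' → D' = D

/-- an invariant control set -/
def isInvControlSet (S : CAS d m) (C : Set (Fin d → ℝ)) : Prop :=
  S.isControlSet C ∧ ∀ x ∈ C, closure C = closure (S.reach x)

/-- local accessibility at a point -/
def locAccAt (S : CAS d m) (x : Fin d → ℝ) : Prop :=
  ∀ T > (0:ℝ), ∀ N ∈ 𝓝 x,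
    (interior (S.reachLe T x) ∩ N).Nonempty ∧ (interior (S.contrLe T x) ∩ N).Nonempty

/-- local accessibility on a set -/
def locAccOn (S : CAS d m) (M : Set (Fin d → ℝ)) : Prop :=
  ∀ x ∈ M, S.locAccAt x

/-- the domain of attraction of a set -/
def domAttr (S : CAS d m) (C : Set (Fin d → ℝ)) : Set (Fin d → ℝ) :=
  {x | (closure (S.reach x) ∩ C).Nonempty}

/-- the strict domain of attraction of an invariant control set -/
def domAttrStrict (S : CAS d m) (C : Set (Fin d → ℝ)) : Set (Fin d → ℝ) :=
  {x | (closure (S.reach x) ∩ C).Nonempty ∧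
    ∀ C', S.isInvControlSet C' → (closure (S.reach x) ∩ C').Nonempty → C' = C}

end CAS

/-! Grönwall's inequality makes every time-`t` map `x ↦ φ x v t` Lipschitz. For short times it
is a perturbation of the identity with Lipschitz constant below `1`, hence open by the inverse
function theorem, and the cocycle property `φ x v (s + t) = φ (φ x v s) (v (s + ·)) t` makes
every time-`t` map open.

Continuity makes `closure C` forward invariant, so `closure C ∩ M` is controlled invariant; it is
also approximately reachable from each of its points `x`, since local accessibility puts a point
of `C` into `𝒪⁺(x)`. Maximality of `C` gives `closure C ∩ M = C`. Then `C` is positively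
invariant, the open sets `int 𝒪⁺_{≤T}(x)` for `x ∈ C` lie in `int C` and accumulate at `x`, and
the open time-`t` maps carry `int C` into itself. Finally, for `y ∈ int C` the open set
`int 𝒪⁻_{≤T}(y)` meets `int C ⊆ cl 𝒪⁺(x)`, hence meets `𝒪⁺(x)`, so `y ∈ 𝒪⁺(x)`.
-/

open scoped NNReal

theorem LipschitzWith.finset_sum {ι α E : Type*} [PseudoEMetricSpace α]
    [SeminormedAddCommGroup E] (s : Finset ι) {f : ι → α → E} {K : ι → ℝ≥0}
    (hf : ∀ i ∈ s, LipschitzWith (K i) (f i)) :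
    LipschitzWith (∑ i ∈ s, K i) fun x => ∑ i ∈ s, f i x := by
  induction s using Finset.cons_induction with
  | empty => simpa using LipschitzWith.const (0 : E)
  | cons i s _ ih =>
    simp only [Finset.sum_cons]
    exact (hf i (Finset.mem_cons_self i s)).add
      (ih fun j hj => hf j (Finset.mem_cons_of_mem hj))

theorem isOpenMap_of_approximatesLinearOn_id {E : Type*} [NormedAddCommGroup E]
    [NormedSpace ℝ E] [CompleteSpace E] {f : E → E} {c : ℝ≥0}
    (hf : ApproximatesLinearOn f (ContinuousLinearMap.id ℝ E) univ c) (hc : c < 1) :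
    IsOpenMap f := fun U hU =>
  (hf.mono_set (subset_univ U)).open_image ⟨id, 1, fun y => by simp, fun y => rfl⟩ hU
    (Or.inr (by simpa using hc))

theorem le_mul_exp_of_le_add_integral {h : ℝ → ℝ} {δ L T : ℝ} (hL : 0 ≤ L)
    (hh : Continuous h) (hT : 0 ≤ T)
    (hle : ∀ t ∈ Icc 0 T, h t ≤ δ + ∫ s in (0:ℝ)..t, L * h s) :
    h T ≤ δ * Real.exp (L * T) := by
  set g : ℝ → ℝ := fun t => δ + ∫ s in (0:ℝ)..t, L * h s
  have hLh : Continuous fun s => L * h s := continuous_const.mul hh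
  have hg : ∀ t, HasDerivAt g (L * h t) t := fun t =>
    (intervalIntegral.integral_hasDerivAt_right (hLh.intervalIntegrable 0 t)
      (hLh.stronglyMeasurableAtFilter _ _) hLh.continuousAt).const_add δ
  have hgT := le_gronwallBound_of_liminf_deriv_right_le (δ := δ) (K := L) (ε := 0)
    (continuous_iff_continuousAt.2 fun t => (hg t).continuousAt).continuousOn
    (fun t _ r hr => (hg t).hasDerivWithinAt.liminf_right_slope_le hr) (by simp [g])
    (fun t ht => (mul_le_mul_of_nonneg_left (hle t (Ico_subset_Icc_self ht)) hL).trans_eq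
      (add_zero _).symm) T ⟨hT, le_rfl⟩
  rw [gronwallBound_ε0, sub_zero] at hgT
  exact (hle T ⟨hT, le_rfl⟩).trans hgT

theorem exists_pos_forall_mul_mul_exp_lt_one (L : ℝ) :
    ∃ δ₀ > 0, ∀ δ ∈ Icc 0 δ₀, L * δ * Real.exp (L * δ) < 1 := by
  have hcont : Continuous fun δ : ℝ => L * δ * Real.exp (L * δ) := by fun_prop
  obtain ⟨ε, hε, hball⟩ := Metric.eventually_nhds_iff.1
    (hcont.continuousAt.eventually_lt (x₀ := 0) (continuousAt_const (y := (1:ℝ))) (by simp))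
  refine ⟨ε / 2, by positivity, fun δ hδ => hball ?_⟩
  rw [Real.dist_0_eq_abs, abs_of_nonneg hδ.1]
  linarith [hδ.2]

namespace CAS

variable {d m : ℕ} (S : CAS d m)

def field (w : Fin m → ℝ) (z : Fin d → ℝ) : Fin d → ℝ :=
  S.f0 z + ∑ i, w i • S.f i z

theorem continuous_field :
    Continuous fun p : (Fin m → ℝ) × (Fin d → ℝ) => S.field p.1 p.2 := by
  have h0 : Continuous S.f0 := S.lip0.choose_spec.continuous
  have hf : ∀ i, Continuous (S.f i) := fun i => (S.lip i).choose_spec.continuous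
  unfold field
  fun_prop

theorem exists_lipschitzWith_field :
    ∃ L : ℝ≥0, ∀ w ∈ S.V, LipschitzWith L (S.field w) := by
  obtain ⟨K₀, hK₀⟩ := S.lip0
  choose K hK using S.lip
  obtain ⟨R, hR, hV⟩ := S.V_compact.isBounded.exists_pos_norm_le
  refine ⟨K₀ + ∑ i, R.toNNReal * K i, fun w hw => hK₀.add ?_⟩
  refine LipschitzWith.finset_sum _ fun i _ =>
    ((lipschitzWith_smul (w i)).comp (hK i)).weaken (mul_le_mul_left ?_ _)
  exact (Real.le_toNNReal_iff_coe_le hR.le).2 ((norm_le_pi_norm w i).trans (hV w hw))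

noncomputable def lipConst : ℝ≥0 := S.exists_lipschitzWith_field.choose

theorem lipschitzWith_field {w : Fin m → ℝ} (hw : w ∈ S.V) :
    LipschitzWith S.lipConst (S.field w) :=
  S.exists_lipschitzWith_field.choose_spec w hw

def IsSolution (v : ℝ → Fin m → ℝ) (a : ℝ → Fin d → ℝ) : Prop :=
  Continuous a ∧ ∀ t, 0 ≤ t → a t = a 0 + ∫ s in (0:ℝ)..t, S.field (v s) (a s)

variable {S} {v w : ℝ → Fin m → ℝ} {x y : Fin d → ℝ} {t : ℝ}

theorem intervalIntegrable_field_comp (hv : v ∈ S.ctrl) {a : ℝ → Fin d → ℝ}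
    (ha : Continuous a) (t₀ t₁ : ℝ) :
    IntervalIntegrable (fun s => S.field (v s) (a s)) volume t₀ t₁ := by
  obtain ⟨B, hB⟩ := ((S.V_compact.prod (isCompact_uIcc.image ha)).image
    S.continuous_field).isBounded.exists_norm_le
  refine intervalIntegrable_iff.2 (Measure.integrableOn_of_bounded (M := B)
    measure_Ioc_lt_top.ne ?_ ?_)
  · exact (S.continuous_field.measurable.comp (hv.1.prodMk ha.measurable)).aestronglyMeasurable
  · refine ae_restrict_of_forall_mem measurableSet_uIoc fun s hs => hB _ ?_
    exact ⟨(v s, a s), ⟨hv.2 s, s, uIoc_subset_uIcc hs, rfl⟩, rfl⟩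

theorem isSolution_φ (hv : v ∈ S.ctrl) (x : Fin d → ℝ) : S.IsSolution v (S.φ x v) :=
  ⟨S.φ_cont x v, fun t ht => by rw [S.φ_init]; exact S.φ_sol x v hv.1 hv.2 t ht⟩

/-- Agreement of the controls on the open interval suffices: concatenated controls are compared
with their pieces below, and they may differ from them at the junction. -/
theorem IsSolution.dist_le {a b : ℝ → Fin d → ℝ} (ha : S.IsSolution v a)
    (hb : S.IsSolution w b) (hv : v ∈ S.ctrl) (hw : w ∈ S.ctrl) (ht : 0 ≤ t)
    (hvw : EqOn v w (Ioo 0 t)) :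
    dist (a t) (b t) ≤ dist (a 0) (b 0) * Real.exp (S.lipConst * t) := by
  refine le_mul_exp_of_le_add_integral S.lipConst.2 (ha.1.dist hb.1) ht fun r hr => ?_
  have hIa := intervalIntegrable_field_comp hv ha.1 0 r
  have hIb := intervalIntegrable_field_comp hw hb.1 0 r
  have hdiff : a r - b r = (a 0 - b 0) +
      ∫ s in (0:ℝ)..r, (S.field (v s) (a s) - S.field (w s) (b s)) := by
    rw [intervalIntegral.integral_sub hIa hIb, ha.2 r hr.1, hb.2 r hr.1]
    abel
  have hpt : ∀ s ∈ Ioo 0 r,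
      ‖S.field (v s) (a s) - S.field (w s) (b s)‖ ≤ S.lipConst * dist (a s) (b s) := by
    intro s hs
    rw [← hvw ⟨hs.1, hs.2.trans_le hr.2⟩, ← dist_eq_norm]
    exact (S.lipschitzWith_field (hv.2 s)).dist_le_mul _ _
  calc dist (a r) (b r)
      ≤ dist (a 0) (b 0) +
          ‖∫ s in (0:ℝ)..r, (S.field (v s) (a s) - S.field (w s) (b s))‖ := by
        rw [dist_eq_norm, hdiff, dist_eq_norm]
        exact norm_add_le _ _
    _ ≤ dist (a 0) (b 0) +
          ∫ s in (0:ℝ)..r, ‖S.field (v s) (a s) - S.field (w s) (b s)‖ := by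
        gcongr
        exact intervalIntegral.norm_integral_le_integral_norm hr.1
    _ ≤ dist (a 0) (b 0) + ∫ s in (0:ℝ)..r, S.lipConst * dist (a s) (b s) := by
        gcongr
        exact intervalIntegral.integral_mono_on_of_le_Ioo hr.1 (hIa.sub hIb).norm
          ((continuous_const.mul (ha.1.dist hb.1)).intervalIntegrable 0 r) hpt

theorem IsSolution.eq_φ {a : ℝ → Fin d → ℝ} (ha : S.IsSolution v a) (hv : v ∈ S.ctrl)
    (ht : 0 ≤ t) : a t = S.φ (a 0) v t := by
  simpa [S.φ_init] using ha.dist_le (isSolution_φ hv (a 0)) hv hv ht fun _ _ => rfl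

theorem dist_φ_le (hv : v ∈ S.ctrl) (x y : Fin d → ℝ) (ht : 0 ≤ t) :
    dist (S.φ x v t) (S.φ y v t) ≤ dist x y * Real.exp (S.lipConst * t) := by
  simpa [S.φ_init] using (isSolution_φ hv x).dist_le (isSolution_φ hv y) hv hv ht fun _ _ => rfl

theorem continuous_φ_initial (hv : v ∈ S.ctrl) (ht : 0 ≤ t) :
    Continuous fun x => S.φ x v t :=
  (LipschitzWith.of_dist_le_mul fun x y => by
    rw [Real.coe_toNNReal _ (Real.exp_pos _).le, mul_comm]
    exact dist_φ_le hv x y ht).continuous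

theorem φ_congr_ctrl (hv : v ∈ S.ctrl) (hw : w ∈ S.ctrl) (x : Fin d → ℝ) (ht : 0 ≤ t)
    (hvw : EqOn v w (Ioo 0 t)) : S.φ x v t = S.φ x w t := by
  simpa [S.φ_init] using (isSolution_φ hv x).dist_le (isSolution_φ hw x) hv hw ht hvw

theorem shift_mem_ctrl (hv : v ∈ S.ctrl) (a : ℝ) : (fun s => v (a + s)) ∈ S.ctrl :=
  ⟨hv.1.comp (measurable_const_add a), fun s => hv.2 (a + s)⟩

theorem concat_mem_ctrl (hv : v ∈ S.ctrl) (hw : w ∈ S.ctrl) (a : ℝ) :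
    (fun s => if s < a then v s else w (s - a)) ∈ S.ctrl := by
  refine ⟨Measurable.ite measurableSet_Iio hv.1 (hw.1.comp (measurable_sub_const a)),
    fun s => ?_⟩
  dsimp only
  split_ifs
  exacts [hv.2 s, hw.2 (s - a)]

theorem isSolution_φ_add (hv : v ∈ S.ctrl) (x : Fin d → ℝ) {a : ℝ} (ha : 0 ≤ a) :
    S.IsSolution (fun s => v (a + s)) fun t => S.φ x v (a + t) := by
  refine ⟨(S.φ_cont x v).comp (continuous_const_add a), fun t ht => ?_⟩
  beta_reduce
  have hI := intervalIntegrable_field_comp hv (S.φ_cont x v)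
  rw [add_zero, (isSolution_φ hv x).2 (a + t) (by linarith), (isSolution_φ hv x).2 a ha,
    ← intervalIntegral.integral_add_adjacent_intervals (hI 0 a) (hI a (a + t)), add_assoc,
    intervalIntegral.integral_comp_add_left (fun s => S.field (v s) (S.φ x v s)), add_zero]

theorem φ_add (hv : v ∈ S.ctrl) (x : Fin d → ℝ) {a : ℝ} (ha : 0 ≤ a) (ht : 0 ≤ t) :
    S.φ x v (a + t) = S.φ (S.φ x v a) (fun s => v (a + s)) t := by
  simpa using (isSolution_φ_add hv x ha).eq_φ (shift_mem_ctrl hv a) ht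

theorem mem_reach (hv : v ∈ S.ctrl) (x : Fin d → ℝ) (ht : 0 ≤ t) :
    S.φ x v t ∈ S.reach x :=
  ⟨v, hv, t, ht, rfl⟩

theorem reach_trans {z : Fin d → ℝ} (hy : y ∈ S.reach x) (hz : z ∈ S.reach y) :
    z ∈ S.reach x := by
  obtain ⟨v, hv, a, ha, rfl⟩ := hy
  obtain ⟨w, hw, t, ht, rfl⟩ := hz
  have hu := concat_mem_ctrl hv hw a
  have hua : S.φ x (fun s => if s < a then v s else w (s - a)) a = S.φ x v a :=
    φ_congr_ctrl hu hv x ha fun s hs => if_pos hs.2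
  have hshift : S.φ (S.φ x v a) (fun s => if a + s < a then v (a + s) else w (a + s - a)) t =
      S.φ (S.φ x v a) w t :=
    φ_congr_ctrl (shift_mem_ctrl hu a) hw _ ht fun s hs => by simp [hs.1.le]
  rw [← hshift, ← hua, ← φ_add hu x ha ht]
  exact mem_reach hu x (add_nonneg ha ht)

theorem approximatesLinearOn_φ (hv : v ∈ S.ctrl) (ht : 0 ≤ t) :
    ApproximatesLinearOn (fun z => S.φ z v t) (ContinuousLinearMap.id ℝ (Fin d → ℝ)) univ
      (S.lipConst * t * Real.exp (S.lipConst * t)).toNNReal := by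
  intro z _ z' _
  have hdiff : S.φ z v t - S.φ z' v t - (z - z') =
      ∫ s in (0:ℝ)..t, (S.field (v s) (S.φ z v s) - S.field (v s) (S.φ z' v s)) := by
    rw [intervalIntegral.integral_sub (intervalIntegrable_field_comp hv (S.φ_cont z v) 0 t)
      (intervalIntegrable_field_comp hv (S.φ_cont z' v) 0 t), (isSolution_φ hv z).2 t ht,
      (isSolution_φ hv z').2 t ht, S.φ_init, S.φ_init]
    abel
  have hpt : ∀ s ∈ uIoc 0 t, ‖S.field (v s) (S.φ z v s) - S.field (v s) (S.φ z' v s)‖ ≤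
      S.lipConst * (dist z z' * Real.exp (S.lipConst * t)) := by
    intro s hs
    rw [uIoc_of_le ht] at hs
    rw [← dist_eq_norm]
    calc _ ≤ S.lipConst * dist (S.φ z v s) (S.φ z' v s) :=
          (S.lipschitzWith_field (hv.2 s)).dist_le_mul _ _
      _ ≤ S.lipConst * (dist z z' * Real.exp (S.lipConst * s)) := by
          gcongr
          exact dist_φ_le hv z z' hs.1.le
      _ ≤ _ := by
          gcongr
          exact hs.2
  rw [ContinuousLinearMap.id_apply, hdiff, Real.coe_toNNReal _ (by positivity)]
  refine (intervalIntegral.norm_integral_le_of_norm_le_const hpt).trans_eq ?_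
  rw [sub_zero, abs_of_nonneg ht, ← dist_eq_norm]
  ring

theorem isOpenMap_φ_of_lt_one (hv : v ∈ S.ctrl) (ht : 0 ≤ t)
    (hsmall : S.lipConst * t * Real.exp (S.lipConst * t) < 1) :
    IsOpenMap fun z => S.φ z v t :=
  isOpenMap_of_approximatesLinearOn_id (approximatesLinearOn_φ hv ht)
    (Real.toNNReal_lt_one.2 hsmall)

theorem isOpenMap_φ (hv : v ∈ S.ctrl) (ht : 0 ≤ t) : IsOpenMap fun z => S.φ z v t := by
  obtain ⟨δ₀, hδ₀, hsmall⟩ := exists_pos_forall_mul_mul_exp_lt_one S.lipConst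
  suffices ∀ n : ℕ, ∀ v ∈ S.ctrl, ∀ t ∈ Icc 0 (n * δ₀), 
      IsOpenMap fun z => S.φ z v t by
    obtain ⟨n, hn⟩ := exists_nat_ge (t / δ₀)
    exact this n v hv t ⟨ht, (div_le_iff₀ hδ₀).1 hn⟩
  intro n
  induction n with
  | zero =>
    intro v _ t ht
    obtain rfl : t = 0 := by simpa using ht
    simp only [S.φ_init]
    exact IsOpenMap.id
  | succ n ih =>
    intro v hv t ht
    have hδ : min t δ₀ ∈ Icc 0 δ₀ := ⟨le_min ht.1 hδ₀.le, min_le_right _ _⟩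
    have hs : t - min t δ₀ ∈ Icc 0 (n * δ₀) := by
      refine ⟨sub_nonneg.2 (min_le_left _ _), ?_⟩
      rw [sub_le_iff_le_add, ← min_add_add_left]
      have := ht.2
      push_cast at this
      exact le_min (le_add_of_nonneg_left (by positivity)) (by linarith)
    have hcomp : (fun z => S.φ z v t) =
        (fun y => S.φ y (fun s => v (t - min t δ₀ + s)) (min t δ₀)) ∘
          fun z => S.φ z v (t - min t δ₀) := by
      funext z
      rw [Function.comp_apply, ← φ_add hv z hs.1 hδ.1, sub_add_cancel]
    rw [hcomp]
    exact (isOpenMap_φ_of_lt_one (shift_mem_ctrl hv _) hδ.1 (hsmall _ hδ)).comp (ih v hv _ hs)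

theorem posInv.interior {C : Set (Fin d → ℝ)} (hC : S.posInv C) : S.posInv (interior C) :=
  fun x hx v hv t ht =>
    interior_maximal (image_subset_iff.2 fun z hz => hC z (interior_subset hz) v hv t ht)
      (isOpenMap_φ hv ht _ isOpen_interior) ⟨x, hx, rfl⟩

theorem reachLe_subset_reach (T : ℝ) (x : Fin d → ℝ) : S.reachLe T x ⊆ S.reach x :=
  fun _ ⟨v, hv, t, ht, hy⟩ => ⟨v, hv, t, ht.1, hy⟩

theorem mem_reach_of_mem_contrLe {T : ℝ} (hy : y ∈ S.contrLe T x) : x ∈ S.reach y :=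
  let ⟨v, hv, t, ht, hx⟩ := hy
  ⟨v, hv, t, ht.1, hx⟩

theorem locAccAt.interior_reach_inter_nonempty (hx : S.locAccAt x) {N : Set (Fin d → ℝ)}
    (hN : N ∈ 𝓝 x) : (interior (S.reach x) ∩ N).Nonempty :=
  (hx 1 one_pos N hN).1.mono
    (inter_subset_inter_left N (interior_mono (reachLe_subset_reach 1 x)))

variable {C M : Set (Fin d → ℝ)}

theorem isInvControlSet.reach_subset_closure (hC : S.isInvControlSet C) (hx : x ∈ closure C) :
    S.reach x ⊆ closure C := by
  rintro _ ⟨v, hv, t, ht, rfl⟩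
  have hmaps : MapsTo (fun z => S.φ z v t) C (closure C) := fun c hc => by
    rw [hC.2 c hc]
    exact subset_closure (mem_reach hv c ht)
  simpa using hmaps.closure (continuous_φ_initial hv ht) hx

theorem isInvControlSet.closure_inter_eq (hC : S.isInvControlSet C) (hM : S.posInv M)
    (hacc : S.locAccOn M) (hCM : C ⊆ M) : closure C ∩ M = C := by
  refine hC.1.2.2 _ (fun c hc => ⟨subset_closure hc, hCM hc⟩)
    ⟨fun x hx => ?_, fun x hx => ?_⟩
  · obtain ⟨x₀, hx₀⟩ := hC.1.1
    obtain ⟨v, hv, -⟩ := hC.1.2.1.1 x₀ hx₀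
    exact ⟨v, hv, fun t ht =>
      ⟨hC.reach_subset_closure hx.1 (mem_reach hv x ht), hM x hx.2 v hv t ht⟩⟩
  · obtain ⟨u, hu, -⟩ := (hacc x hx.2).interior_reach_inter_nonempty Filter.univ_mem
    obtain ⟨c, hcx, hcC⟩ := mem_closure_iff.1
      (hC.reach_subset_closure hx.1 (interior_subset hu)) _ isOpen_interior hu
    calc closure C ∩ M ⊆ closure C := inter_subset_left
      _ = closure (S.reach c) := hC.2 c hcC
      _ ⊆ closure (S.reach x) := closure_mono fun z hz => reach_trans (interior_subset hcx) hz

theorem isInvControlSet.reach_subset (hC : S.isInvControlSet C) (hM : S.posInv M)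
    (hacc : S.locAccOn M) (hCM : C ⊆ M) (hx : x ∈ C) : S.reach x ⊆ C := by
  rintro _ ⟨v, hv, t, ht, rfl⟩
  rw [← hC.closure_inter_eq hM hacc hCM]
  exact ⟨hC.reach_subset_closure (subset_closure hx) (mem_reach hv x ht),
    hM x (hCM hx) v hv t ht⟩

theorem subset_closure_interior_of_reach_subset (hacc : S.locAccOn M) (hCM : C ⊆ M)
    (hC : ∀ x ∈ C, S.reach x ⊆ C) : C ⊆ closure (interior C) := fun x hx =>
  mem_closure_iff_nhds.2 fun _ hN =>
    let ⟨u, hu, huN⟩ := (hacc x (hCM hx)).interior_reach_inter_nonempty hN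
    ⟨u, huN, interior_mono (hC x hx) hu⟩

theorem isInvControlSet.interior_subset_reach (hC : S.isInvControlSet C)
    (hacc : S.locAccOn M) (hCM : C ⊆ M) (hx : x ∈ C) : interior C ⊆ S.reach x := by
  intro y hy
  obtain ⟨z, hz, hzC⟩ :=
    (hacc y (hCM (interior_subset hy)) 1 one_pos _ (isOpen_interior.mem_nhds hy)).2
  obtain ⟨p, hpz, hpx⟩ :=
    mem_closure_iff.1 (hC.1.2.1.2 x hx (interior_subset hzC)) _ isOpen_interior hz
  exact reach_trans hpx (mem_reach_of_mem_contrLe (interior_subset hpz))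

end CAS

/-- If the system is locally accessible on a positively invariant
set `M`, then every invariant control set `C ⊆ M` has nonempty interior, satisfies
`cl_M (int C) = C`, both `C` and `int C` are positively invariant, and
`int C ⊆ 𝒪⁺(x)` and `C = cl_M 𝒪⁺(x)` for all `x ∈ C`. -/
theorem stmt7 {d m : ℕ} (S : CAS d m) (M C : Set (Fin d → ℝ))
    (hM : S.posInv M) (hacc : S.locAccOn M)
    (hC : S.isInvControlSet C) (hCM : C ⊆ M) :
    (interior C).Nonempty ∧
    closure (interior C) ∩ M = C ∧
    S.posInv C ∧ S.posInv (interior C) ∧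
    ∀ x ∈ C, interior C ⊆ S.reach x ∧ closure (S.reach x) ∩ M = C := by
  have hreach : ∀ x ∈ C, S.reach x ⊆ C := fun x hx => hC.reach_subset hM hacc hCM hx
  have hposC : S.posInv C := fun x hx v hv t ht => hreach x hx (CAS.mem_reach hv x ht)
  have hCint : C ⊆ closure (interior C) :=
    CAS.subset_closure_interior_of_reach_subset hacc hCM hreach
  have hCeq : closure C ∩ M = C := hC.closure_inter_eq hM hacc hCM
  refine ⟨closure_nonempty_iff.1 (hC.1.1.mono hCint), ?_, hposC, hposC.interior,
    fun x hx => ⟨hC.interior_subset_reach hacc hCM hx, by rw [← hC.2 x hx, hCeq]⟩⟩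
  exact Subset.antisymm
    ((inter_subset_inter_left M (closure_mono interior_subset)).trans hCeq.subset)
    (subset_inter hCint hCM)
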